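/- For ω₀ > 0 and x ∈ ℤ, the Green's function G_{ω₀}(x) := ∫₀¹ cos(2πux) / (4 sin²(πu) + ω₀²) du satisfies G_{ω₀}(x) = (1/(ω₀ √(ω₀²+4))) · (1 + ω₀²/2 + ω₀ √(1 + ω₀²/4))^{-|x|}. -/

import Mathlib

open Real

namespace GreenAux

noncomputable def den (ω₀ u : ℝ) : ℝ := 4 * Real.sin (Real.pi * u) ^ 2 + ω₀ ^ 2

noncomputable def A (ω₀ : ℝ) (x : ℤ) : ℝ :=
  ∫ u in (0:ℝ)..1, Real.cos (2 * Real.pi * u * x) / den ω₀ u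

lemma den_pos {ω₀ : ℝ} (hω₀ : 0 < ω₀) (u : ℝ) : 0 < den ω₀ u := by
  unfold den; positivity

lemma cont_integrand {ω₀ : ℝ} (hω₀ : 0 < ω₀) (c : ℝ) :
    Continuous fun u => Real.cos (c * u) / den ω₀ u := by
  apply Continuous.div (by fun_prop) (by unfold den; fun_prop)
  exact fun u => (den_pos hω₀ u).ne'

/-- symmetry -/
lemma A_neg (ω₀ : ℝ) (x : ℤ) : A ω₀ (-x) = A ω₀ x := by
  unfold A
  congr 1; ext u
  push_cast
  rw [mul_neg, Real.cos_neg]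

/-- delta integral -/
lemma delta_integral (x : ℤ) :
    (∫ u in (0:ℝ)..1, Real.cos (2 * Real.pi * u * x)) = if x = 0 then 1 else 0 := by
  rcases eq_or_ne x 0 with h | h
  · simp [h]
  · rw [if_neg h]
    have hc : (2 * Real.pi * (x:ℝ)) ≠ 0 := by
      have := Real.pi_ne_zero
      have : (x:ℝ) ≠ 0 := Int.cast_ne_zero.mpr h
      positivity
    have key : ∀ u ∈ Set.uIcc (0:ℝ) 1,
        HasDerivAt (fun u => Real.sin (2 * Real.pi * x * u) / (2 * Real.pi * x))
          (Real.cos (2 * Real.pi * u * x)) u := by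
      intro u _
      have h1 : HasDerivAt (fun u : ℝ => 2 * Real.pi * x * u) (2 * Real.pi * x) u := by
        simpa using (hasDerivAt_id u).const_mul (2 * Real.pi * (x:ℝ))
      have := (h1.sin).div_const (2 * Real.pi * x)
      refine this.congr_deriv ?_
      symm
      rw [mul_div_assoc, div_self hc, mul_one]
      ring
    rw [intervalIntegral.integral_eq_sub_of_hasDerivAt key
      ((Continuous.intervalIntegrable (by fun_prop) 0 1))]
    have h1 : Real.sin (2 * Real.pi * (x:ℝ) * 1) = 0 := by
      have : (2 * Real.pi * (x:ℝ) * 1) = ((2*x : ℤ) : ℝ) * Real.pi := by push_cast; ring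
      rw [this, Real.sin_int_mul_pi]
    rw [mul_one] at h1
    simp [h1]

/-- the recurrence -/
lemma contI {ω₀ : ℝ} (hω₀ : 0 < ω₀) (c : ℝ) :
    Continuous fun u => Real.cos (2 * Real.pi * u * c) / den ω₀ u := by
  apply Continuous.div (by fun_prop) (by unfold den; fun_prop)
  exact fun u => (den_pos hω₀ u).ne'

lemma A_rec {ω₀ : ℝ} (hω₀ : 0 < ω₀) (x : ℤ) :
    (2 + ω₀ ^ 2) * A ω₀ x = A ω₀ (x + 1) + A ω₀ (x - 1) + (if x = 0 then 1 else 0) := by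
  have hd : ∀ u : ℝ, den ω₀ u ≠ 0 := fun u => (den_pos hω₀ u).ne'
  have h1 : A ω₀ (x + 1) + A ω₀ (x - 1)
      = ∫ u in (0:ℝ)..1, (2 * Real.cos (2 * Real.pi * u)) * Real.cos (2 * Real.pi * u * x)
          / den ω₀ u := by
    unfold A
    rw [← intervalIntegral.integral_add ((contI hω₀ _).intervalIntegrable 0 1)
      ((contI hω₀ _).intervalIntegrable 0 1)]
    apply intervalIntegral.integral_congr
    intro u _
    have e1 : 2 * Real.pi * u * ((x : ℝ) + 1) = 2 * Real.pi * u * x + 2 * Real.pi * u := by ring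
    have e2 : 2 * Real.pi * u * ((x : ℝ) - 1) = 2 * Real.pi * u * x - 2 * Real.pi * u := by ring
    push_cast
    rw [e1, e2, Real.cos_add, Real.cos_sub, ← add_div]
    ring
  have h2 : (2 + ω₀ ^ 2) * A ω₀ x
      - (∫ u in (0:ℝ)..1, (2 * Real.cos (2 * Real.pi * u)) * Real.cos (2 * Real.pi * u * x)
          / den ω₀ u)
      = ∫ u in (0:ℝ)..1, Real.cos (2 * Real.pi * u * x) := by
    unfold A
    rw [← intervalIntegral.integral_const_mul,
      ← intervalIntegral.integral_sub
        ((((contI hω₀ (x:ℝ)).intervalIntegrable 0 1)).const_mul _)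
        ((Continuous.intervalIntegrable (by
          apply Continuous.div (by fun_prop) (by unfold den; fun_prop)
          exact fun u => (den_pos hω₀ u).ne') 0 1))]
    apply intervalIntegral.integral_congr
    intro u _
    have hC : Real.cos (2 * Real.pi * u) = 1 - 2 * Real.sin (Real.pi * u) ^ 2 := by
      rw [show 2 * Real.pi * u = 2 * (Real.pi * u) by ring, Real.cos_two_mul',
        Real.cos_sq']
      ring
    simp only [den]
    rw [hC]
    field_simp
    ring
  have := delta_integral x
  rw [this] at h2
  rw [h1]
  linarith


lemma A_zero {ω₀ : ℝ} (hω₀ : 0 < ω₀) :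
    A ω₀ 0 = 1 / (ω₀ * Real.sqrt (ω₀ ^ 2 + 4)) := by
  set s : ℝ := Real.sqrt (ω₀ ^ 2 + 4) with hs_def
  have hs0 : 0 < s := Real.sqrt_pos.mpr (by positivity)
  have hss : s ^ 2 = ω₀ ^ 2 + 4 := Real.sq_sqrt (by positivity)
  have hsw : ω₀ < s := by nlinarith
  set H : ℝ → ℝ := fun u => (1 / (Real.pi * ω₀ * s)) *
    (Real.pi * u + Real.arctan ((s - ω₀) * Real.sin (2 * Real.pi * u) /
      ((s + ω₀) - (s - ω₀) * Real.cos (2 * Real.pi * u)))) with hH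
  have key : ∀ u ∈ Set.uIcc (0:ℝ) 1, HasDerivAt H (1 / den ω₀ u) u := by
    intro u _
    set c2 := Real.cos (2 * Real.pi * u) with hc2
    set s2 := Real.sin (2 * Real.pi * u) with hs2
    have hpy : s2 ^ 2 = 1 - c2 ^ 2 := by
      rw [hs2, hc2, Real.sin_sq]
    have hc2le : c2 ≤ 1 := Real.cos_le_one _
    have hP : 0 < (s + ω₀) - (s - ω₀) * c2 := by nlinarith
    have h2pi : HasDerivAt (fun u : ℝ => 2 * Real.pi * u) (2 * Real.pi) u := by
      simpa using (hasDerivAt_id u).const_mul (2 * Real.pi)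
    have hN : HasDerivAt (fun u : ℝ => (s - ω₀) * Real.sin (2 * Real.pi * u))
        ((s - ω₀) * (c2 * (2 * Real.pi))) u := (h2pi.sin).const_mul _
    have hD : HasDerivAt (fun u : ℝ => (s + ω₀) - (s - ω₀) * Real.cos (2 * Real.pi * u))
        (-((s - ω₀) * (-s2 * (2 * Real.pi)))) u := ((h2pi.cos).const_mul _).const_sub _
    have hg := hN.div hD hP.ne'
    have harc := hg.arctan
    have hlin : HasDerivAt (fun u : ℝ => Real.pi * u) Real.pi u := by
      simpa using (hasDerivAt_id u).const_mul Real.pi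
    have hfull := ((hlin.add harc).const_mul (1 / (Real.pi * ω₀ * s)))
    refine hfull.congr_deriv ?_
    symm
    simp only [Pi.div_apply, ← hc2, ← hs2]
    have hden : den ω₀ u = ω₀ ^ 2 + 2 - 2 * c2 := by
      have : c2 = 1 - 2 * Real.sin (Real.pi * u) ^ 2 := by
        rw [hc2, show 2 * Real.pi * u = 2 * (Real.pi * u) by ring, Real.cos_two_mul',
          Real.cos_sq']
        ring
      unfold den
      rw [this]; ring
    rw [hden]
    set P : ℝ := (s + ω₀) - (s - ω₀) * c2 with hPdef
    set N : ℝ := (s - ω₀) * s2 with hNdef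
    set X : ℝ := (s - ω₀) * (c2 * (2 * Real.pi)) * P - N * (-((s - ω₀) * (-s2 * (2 * Real.pi)))) with hXdef
    set Q : ℝ := P ^ 2 + N ^ 2 with hQdef
    have hdenpos : (0:ℝ) < ω₀ ^ 2 + 2 - 2 * c2 := by nlinarith
    have hQeq : Q = 4 * (ω₀ ^ 2 + 2 - 2 * c2) := by
      rw [hQdef, hPdef, hNdef]
      linear_combination ((s - ω₀) ^ 2) * hpy + (2 - 2 * c2) * hss
    have hXeq : Real.pi * Q + X = 4 * Real.pi * s * ω₀ := by
      rw [hQeq, hXdef, hNdef, hPdef]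
      linear_combination (-2 * Real.pi * (s - ω₀) ^ 2) * hpy + (2 * Real.pi * c2 - 2 * Real.pi) * hss
    have hQpos : (0 : ℝ) < Q := by rw [hQeq]; linarith
    have h1g : 1 + (N / P) ^ 2 = Q / P ^ 2 := by
      rw [hQdef]; field_simp
    rw [h1g]
    have h2 : 1 / (Q / P ^ 2) * (X / P ^ 2) = X / Q := by
      rw [one_div_div, div_mul_div_comm, mul_comm Q (P ^ 2)]
      exact mul_div_mul_left _ _ (by positivity)
    rw [h2]
    have hd' : (ω₀ ^ 2 + 2 - 2 * c2) ≠ 0 := hdenpos.ne'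
    have h3 : Real.pi + X / Q = Real.pi * s * ω₀ / (ω₀ ^ 2 + 2 - 2 * c2) := by
      have hXv : X = 4 * Real.pi * s * ω₀ - Real.pi * Q := by linarith
      rw [hXv, hQeq]
      field_simp
      ring
    rw [h3, div_mul_div_comm, one_mul]
    rw [div_eq_div_iff hd' (by positivity)]
    ring
  have hint : IntervalIntegrable (fun u => 1 / den ω₀ u) MeasureTheory.volume 0 1 := by
    apply Continuous.intervalIntegrable
    apply Continuous.div continuous_const (by unfold den; fun_prop)
    exact fun u => (den_pos hω₀ u).ne'
  have : (∫ u in (0:ℝ)..1, 1 / den ω₀ u) = H 1 - H 0 :=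
    intervalIntegral.integral_eq_sub_of_hasDerivAt key hint
  have hA : A ω₀ 0 = ∫ u in (0:ℝ)..1, 1 / den ω₀ u := by
    unfold A
    apply intervalIntegral.integral_congr
    intro u _
    norm_num
  rw [hA, this, hH]
  have h1 : Real.sin (2 * Real.pi) = 0 := by
    simpa using Real.sin_int_mul_pi 2
  have hpi := Real.pi_pos
  simp [h1]
  field_simp

lemma A_one {ω₀ : ℝ} (hω₀ : 0 < ω₀) :
    A ω₀ 1 = 1 / (ω₀ * Real.sqrt (ω₀ ^ 2 + 4)) *
      (1 + ω₀ ^ 2 / 2 - ω₀ * Real.sqrt (ω₀ ^ 2 + 4) / 2) := by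
  set s : ℝ := Real.sqrt (ω₀ ^ 2 + 4) with hs_def
  have hs0 : 0 < s := Real.sqrt_pos.mpr (by positivity)
  have hss : s ^ 2 = ω₀ ^ 2 + 4 := Real.sq_sqrt (by positivity)
  have hrec := A_rec hω₀ 0
  rw [if_pos rfl] at hrec
  have hneg : A ω₀ (0 - 1) = A ω₀ (0 + 1) := by
    rw [show (0 - 1 : ℤ) = -(0 + 1) by ring, A_neg]
  rw [hneg, A_zero hω₀, ← hs_def] at hrec
  have h1 : A ω₀ (0 + 1) = A ω₀ 1 := by norm_num
  rw [h1] at hrec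
  have hws : ω₀ * s ≠ 0 := by positivity
  have hA1 : A ω₀ 1 = ((2 + ω₀ ^ 2) * (1 / (ω₀ * s)) - 1) / 2 := by linarith
  rw [hA1]
  field_simp

lemma A_nat {ω₀ : ℝ} (hω₀ : 0 < ω₀) (n : ℕ) :
    A ω₀ n = 1 / (ω₀ * Real.sqrt (ω₀ ^ 2 + 4)) *
      (1 + ω₀ ^ 2 / 2 - ω₀ * Real.sqrt (ω₀ ^ 2 + 4) / 2) ^ n := by
  set s : ℝ := Real.sqrt (ω₀ ^ 2 + 4) with hs_def
  have hs0 : 0 < s := Real.sqrt_pos.mpr (by positivity)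
  have hss : s ^ 2 = ω₀ ^ 2 + 4 := Real.sq_sqrt (by positivity)
  set q : ℝ := 1 + ω₀ ^ 2 / 2 - ω₀ * s / 2 with hq_def
  have hqq : (2 + ω₀ ^ 2) * q = q ^ 2 + 1 := by
    rw [hq_def]
    linear_combination (-(ω₀ ^ 2) / 4) * hss
  induction n using Nat.twoStepInduction with
  | zero => simpa using A_zero hω₀
  | one => simpa using A_one hω₀
  | more n ih1 ih2 =>
    have hrec := A_rec hω₀ ((n : ℤ) + 1)
    rw [if_neg (by omega)] at hrec
    have e1 : ((n : ℤ) + 1 + 1) = ((n + 2 : ℕ) : ℤ) := by push_cast; ring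
    have e2 : ((n : ℤ) + 1 - 1) = ((n : ℕ) : ℤ) := by push_cast; ring
    have e3 : ((n : ℤ) + 1) = ((n + 1 : ℕ) : ℤ) := by push_cast; ring
    rw [e1, e2, e3, ih1, ih2] at hrec
    have : A ω₀ ((n + 2 : ℕ) : ℤ) = (2 + ω₀ ^ 2) * (1 / (ω₀ * s) * q ^ (n + 1))
        - 1 / (ω₀ * s) * q ^ n := by linarith
    rw [this]
    linear_combination (1 / (ω₀ * s) * q ^ n) * hqq

end GreenAux

open GreenAux

/-- The Green's function of `-Δ_ℤ + ω₀²` given by its integral representation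
equals the explicit exponentially decaying formula. -/
theorem green_function_formula (ω₀ : ℝ) (hω₀ : 0 < ω₀) (x : ℤ) :
    (∫ u in (0:ℝ)..1, Real.cos (2 * Real.pi * u * x) / (4 * Real.sin (Real.pi * u) ^ 2 + ω₀ ^ 2))
      = (1 / (ω₀ * Real.sqrt (ω₀ ^ 2 + 4))) *
        (1 + ω₀ ^ 2 / 2 + ω₀ * Real.sqrt (1 + ω₀ ^ 2 / 4)) ^ (-|x|) := by
  set s : ℝ := Real.sqrt (ω₀ ^ 2 + 4) with hs_def
  have hs0 : 0 < s := Real.sqrt_pos.mpr (by positivity)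
  have hss : s ^ 2 = ω₀ ^ 2 + 4 := Real.sq_sqrt (by positivity)
  have hsq : Real.sqrt (1 + ω₀ ^ 2 / 4) = s / 2 := by
    rw [show (1 + ω₀ ^ 2 / 4 : ℝ) = (s / 2) ^ 2 by rw [div_pow]; rw [hss]; ring]
    exact Real.sqrt_sq (by positivity)
  rw [hsq]
  set r : ℝ := 1 + ω₀ ^ 2 / 2 + ω₀ * (s / 2) with hr_def
  set q : ℝ := 1 + ω₀ ^ 2 / 2 - ω₀ * s / 2 with hq_def
  have hrpos : 0 < r := by rw [hr_def]; positivity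
  have hrq : r * q = 1 := by
    rw [hr_def, hq_def]
    linear_combination (-(ω₀ ^ 2) / 4) * hss
  have hrinv : r⁻¹ = q := by
    field_simp [hrpos.ne'] at hrq ⊢
    linarith [hrq]
  have hLHS : (∫ u in (0:ℝ)..1,
      Real.cos (2 * Real.pi * u * x) / (4 * Real.sin (Real.pi * u) ^ 2 + ω₀ ^ 2)) = A ω₀ x := rfl
  rw [hLHS]
  have hAx : A ω₀ x = A ω₀ (x.natAbs : ℤ) := by
    rcases Int.natAbs_eq x with h | h
    · rw [← h]
    · calc A ω₀ x = A ω₀ (-(x.natAbs : ℤ)) := by rw [← h]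
        _ = A ω₀ (x.natAbs : ℤ) := A_neg ω₀ _
  rw [hAx, A_nat hω₀ x.natAbs, ← hs_def]
  rw [Int.abs_eq_natAbs, zpow_neg, zpow_natCast, ← inv_pow, hrinv]
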